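/- Lower bound on the scattering length difference under truncation: a - ã ≥ ½ ∫_{max(R̃,a)}^∞ v(r)(r-a)² dr, where ã is the scattering length of the potential truncated at radius R̃. In particular, finiteness of a requires ∫^∞ v(r) r² dr < ∞ at infinity. -/

import Mathlib

/-!
Since `(w w')' = w'² + h w² ≥ 0`, a solution of `w'' = h w` with `h ≥ 0` and `w(0) = 0` has
`w w' ≥ 0`, so `w²` is nondecreasing on `[0, ∞)`; as `w' → 1` forces `w ≥ 0` far out, `w` cannot
change sign and is nonnegative. Hence `u` is convex and lies above its asymptote `r - a`, while
`ũ'' = 0` beyond `R̃` gives `ũ(r) = r - ã` there. The Wronskian `Ω = u' ũ - u ũ'` vanishes at `0`,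
tends to `a - ã`, and `Ω' = ½ v u ũ 1_{r > R̃} ≥ 0`. For `r > max(R̃, a)` this is
`½ v u (r - ã) ≥ ½ v (r - a)²`, and integrating `Ω'` over `(max(R̃, a), ∞)` gives the bound.
-/

open Filter MeasureTheory Set Topology

theorem monotoneOn_Ici_of_hasDerivAt_nonneg {f f' : ℝ → ℝ} {c : ℝ}
    (hf : ∀ x, HasDerivAt f (f' x) x) (hf' : ∀ x, c < x → 0 ≤ f' x) :
    MonotoneOn f (Ici c) :=
  monotoneOn_of_hasDerivWithinAt_nonneg (convex_Ici c)
    (fun x _ => (hf x).continuousAt.continuousWithinAt)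
    (fun x _ => (hf x).hasDerivWithinAt) (fun x hx => hf' x (by rwa [interior_Ici] at hx))

theorem nonneg_of_hasDerivAt_nonneg {f f' : ℝ → ℝ} (hf : ∀ x, HasDerivAt f (f' x) x)
    (hf' : ∀ x, 0 < x → 0 ≤ f' x) (h0 : f 0 = 0) {x : ℝ} (hx : 0 ≤ x) : 0 ≤ f x :=
  h0 ▸ monotoneOn_Ici_of_hasDerivAt_nonneg hf hf' self_mem_Ici hx hx

theorem eqOn_Ioi_of_deriv_eq_zero_of_tendsto {g : ℝ → ℝ} {R l : ℝ}
    (hg : DifferentiableOn ℝ g (Ioi R)) (hg' : EqOn (deriv g) 0 (Ioi R))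
    (hlim : Tendsto g atTop (𝓝 l)) : EqOn g (fun _ => l) (Ioi R) := by
  intro x hx
  refine tendsto_nhds_unique (tendsto_const_nhds.congr' ?_) hlim
  filter_upwards [eventually_gt_atTop R] with y hy
  exact isOpen_Ioi.is_const_of_deriv_eq_zero isPreconnected_Ioi hg hg' hx hy

theorem lintegral_Ioi_ofReal_deriv_le {f f' : ℝ → ℝ} {M L : ℝ} (hM : 0 ≤ M)
    (hf : ∀ x, HasDerivAt f (f' x) x) (hf' : ∀ x, 0 < x → 0 ≤ f' x) (h0 : f 0 = 0)
    (hlim : Tendsto f atTop (𝓝 L)) :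
    ∫⁻ x in Ioi M, ENNReal.ofReal (f' x) ≤ ENNReal.ofReal L := by
  have hderiv : ∀ x ∈ Ici M, HasDerivAt f (f' x) x := fun x _ => hf x
  have hpos : ∀ x ∈ Ioi M, 0 ≤ f' x := fun x hx => hf' x (hM.trans_lt hx)
  rw [← ofReal_integral_eq_lintegral_ofReal (integrableOn_Ioi_deriv_of_nonneg' hderiv hpos hlim)
    ((ae_restrict_iff' measurableSet_Ioi).2 (ae_of_all _ hpos)),
    integral_Ioi_of_hasDerivAt_of_nonneg' hderiv hpos hlim]
  exact ENNReal.ofReal_le_ofReal (sub_le_self _ (nonneg_of_hasDerivAt_nonneg hf hf' h0 hM))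

theorem sub_le_of_convexOn_Ici {f : ℝ → ℝ} {a s : ℝ} (hconv : ConvexOn ℝ (Ici s) f)
    (hf : Differentiable ℝ f) (hnorm : Tendsto (deriv f) atTop (𝓝 1))
    (hscat : Tendsto (fun r => r - f r / deriv f r) atTop (𝓝 a)) : s - a ≤ f s := by
  have hlim : Tendsto (fun r => deriv f r * (s - (r - f r / deriv f r))) atTop
      (𝓝 (1 * (s - a))) := hnorm.mul (tendsto_const_nhds.sub hscat)
  rw [one_mul] at hlim
  refine le_of_tendsto hlim ?_
  filter_upwards [eventually_gt_atTop s, hnorm.eventually (eventually_gt_nhds one_pos)]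
    with r hsr hr
  have hslope := hconv.slope_le_deriv self_mem_Ici hsr.le hsr (hf r)
  rw [slope_def_field, div_le_iff₀ (sub_pos.2 hsr)] at hslope
  have hexpand : deriv f r * (s - (r - f r / deriv f r)) = f r - deriv f r * (r - s) := by
    field_simp
    ring
  linarith

section ZeroEnergySolution

variable {w h : ℝ → ℝ}

theorem nonneg_of_deriv_deriv_eq_mul (hw : ContDiff ℝ 2 w) (h0 : w 0 = 0)
    (hh : ∀ r, 0 < r → 0 ≤ h r) (hODE : ∀ r, 0 < r → deriv (deriv w) r = h r * w r)
    (hnorm : Tendsto (deriv w) atTop (𝓝 1)) {r : ℝ} (hr : 0 ≤ r) : 0 ≤ w r := by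
  have hw1 : Differentiable ℝ w := hw.differentiable (by norm_num)
  have hw2 : Differentiable ℝ (deriv w) := hw.differentiable_deriv_two
  have hww' : ∀ x, 0 ≤ x → 0 ≤ w x * deriv w x :=
    fun x => nonneg_of_hasDerivAt_nonneg (f := fun y => w y * deriv w y)
      (fun y => (hw1 y).hasDerivAt.mul (hw2 y).hasDerivAt)
      (fun y hy => by rw [hODE y hy]; nlinarith [hh y hy, sq_nonneg (deriv w y), sq_nonneg (w y)])
      (by rw [h0, zero_mul])
  have hsq : MonotoneOn (fun x => w x * w x) (Ici 0) :=
    monotoneOn_Ici_of_hasDerivAt_nonneg (fun x => (hw1 x).hasDerivAt.mul (hw1 x).hasDerivAt)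
      fun x hx => by linarith [hww' x hx.le]
  obtain ⟨R, hR, hrR⟩ :=
    ((hnorm.eventually (eventually_gt_nhds one_pos)).and (eventually_ge_atTop r)).exists
  have hwR : 0 ≤ w R := by nlinarith [hww' R (hr.trans hrR)]
  by_contra! hneg
  obtain ⟨c, hc, hc0⟩ := intermediate_value_Icc hrR hw1.continuous.continuousOn ⟨hneg.le, hwR⟩
  have hsq_rc := hsq hr (hr.trans hc.1) hc.1
  simp only [hc0] at hsq_rc
  nlinarith

theorem convexOn_Ici_of_deriv_deriv_eq_mul (hw : ContDiff ℝ 2 w) (h0 : w 0 = 0)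
    (hh : ∀ r, 0 < r → 0 ≤ h r) (hODE : ∀ r, 0 < r → deriv (deriv w) r = h r * w r)
    (hnorm : Tendsto (deriv w) atTop (𝓝 1)) : ConvexOn ℝ (Ici 0) w := by
  refine MonotoneOn.convexOn_of_deriv (convex_Ici 0) hw.continuous.continuousOn
    (hw.differentiable (by norm_num)).differentiableOn (MonotoneOn.mono ?_ interior_subset)
  refine monotoneOn_Ici_of_hasDerivAt_nonneg (fun x => (hw.differentiable_deriv_two x).hasDerivAt)
    fun x hx => ?_
  rw [hODE x hx]
  exact mul_nonneg (hh x hx) (nonneg_of_deriv_deriv_eq_mul hw h0 hh hODE hnorm hx.le)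

theorem sub_le_of_deriv_deriv_eq_mul {a : ℝ} (hw : ContDiff ℝ 2 w) (h0 : w 0 = 0)
    (hh : ∀ r, 0 < r → 0 ≤ h r) (hODE : ∀ r, 0 < r → deriv (deriv w) r = h r * w r)
    (hnorm : Tendsto (deriv w) atTop (𝓝 1))
    (hscat : Tendsto (fun r => r - w r / deriv w r) atTop (𝓝 a)) {s : ℝ} (hs : 0 ≤ s) :
    s - a ≤ w s :=
  sub_le_of_convexOn_Ici
    ((convexOn_Ici_of_deriv_deriv_eq_mul hw h0 hh hODE hnorm).subset (Ici_subset_Ici.2 hs)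
      (convex_Ici s)) (hw.differentiable (by norm_num)) hnorm hscat

theorem eq_sub_of_deriv_deriv_eq_zero {R b : ℝ} (hw : ContDiff ℝ 2 w)
    (hzero : ∀ r, R < r → deriv (deriv w) r = 0) (hnorm : Tendsto (deriv w) atTop (𝓝 1))
    (hscat : Tendsto (fun r => r - w r / deriv w r) atTop (𝓝 b)) {r : ℝ} (hr : R < r) :
    deriv w r = 1 ∧ w r = r - b := by
  have hslope : EqOn (deriv w) (fun _ => 1) (Ioi R) :=
    eqOn_Ioi_of_deriv_eq_zero_of_tendsto hw.differentiable_deriv_two.differentiableOn hzero hnorm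
  have hsub : ∀ x, HasDerivAt (fun y => y - w y) (1 - deriv w x) x :=
    fun x => (hasDerivAt_id' x).sub (hw.differentiable (by norm_num) x).hasDerivAt
  have hintercept : EqOn (fun y => y - w y) (fun _ => b) (Ioi R) := by
    refine eqOn_Ioi_of_deriv_eq_zero_of_tendsto
      (fun x _ => (hsub x).differentiableAt.differentiableWithinAt)
      (fun x hx => by rw [(hsub x).deriv, hslope hx, sub_self]; rfl) (hscat.congr' ?_)
    filter_upwards [eventually_gt_atTop R] with y hy
    rw [hslope hy, div_one]
  exact ⟨hslope hr, by linarith [hintercept hr]⟩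

end ZeroEnergySolution

noncomputable def wronskian (f g : ℝ → ℝ) (r : ℝ) : ℝ := deriv f r * g r - f r * deriv g r

theorem hasDerivAt_wronskian {f g : ℝ → ℝ} (hf : ContDiff ℝ 2 f) (hg : ContDiff ℝ 2 g) (x : ℝ) :
    HasDerivAt (wronskian f g) (deriv (deriv f) x * g x - f x * deriv (deriv g) x) x := by
  have := ((hf.differentiable_deriv_two x).hasDerivAt.mul
    (hg.differentiable (by norm_num) x).hasDerivAt).sub
    ((hf.differentiable (by norm_num) x).hasDerivAt.mul (hg.differentiable_deriv_two x).hasDerivAt)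
  exact this.congr_deriv (by ring)

theorem tendsto_wronskian {f g : ℝ → ℝ} {a b R : ℝ} (hnorm : Tendsto (deriv f) atTop (𝓝 1))
    (hscat : Tendsto (fun r => r - f r / deriv f r) atTop (𝓝 a))
    (hg : ∀ r, R < r → deriv g r = 1 ∧ g r = r - b) :
    Tendsto (wronskian f g) atTop (𝓝 (a - b)) := by
  have hlim : Tendsto (fun r => deriv f r * ((r - f r / deriv f r) - b)) atTop
      (𝓝 (1 * (a - b))) := hnorm.mul (hscat.sub tendsto_const_nhds)
  rw [one_mul] at hlim
  refine hlim.congr' ?_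
  filter_upwards [eventually_gt_atTop R, hnorm.eventually (eventually_gt_nhds one_pos)]
    with r hr hpos
  rw [wronskian, (hg r hr).1, (hg r hr).2]
  field_simp
  ring

/-- Lower bound on the scattering length difference under truncation:
`a - at' ≥ ½ ∫_{max(Rt,a)}^∞ v(r)(r-a)² dr`. -/
theorem stmt_7 (v u : ℝ → ℝ) (a : ℝ) (Rt : ℝ) (hR : 0 < Rt)
    (hv : ∀ r, 0 < r → 0 ≤ v r)
    (hu : ContDiff ℝ 2 u) (h0 : u 0 = 0)
    (hODE : ∀ r, 0 < r → deriv (deriv u) r = (1 / 2) * v r * u r)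
    (hnorm : Tendsto (deriv u) atTop (nhds 1))
    (hscat : Tendsto (fun r => r - u r / deriv u r) atTop (nhds a))
    (ut : ℝ → ℝ) (at' : ℝ)
    (hut : ContDiff ℝ 2 ut) (h0' : ut 0 = 0)
    (hODE' : ∀ r, 0 < r →
      deriv (deriv ut) r = (1 / 2) * (if r ≤ Rt then v r else 0) * ut r)
    (hnorm' : Tendsto (deriv ut) atTop (nhds 1))
    (hscat' : Tendsto (fun r => r - ut r / deriv ut r) atTop (nhds at')) :
    2⁻¹ * ∫⁻ r in Set.Ioi (max Rt a), ENNReal.ofReal (v r * (r - a) ^ 2)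
      ≤ ENNReal.ofReal (a - at') := by
  have hhalf : ∀ r, 0 < r → 0 ≤ 1 / 2 * v r := fun r hr => by have := hv r hr; positivity
  have hut0 : ∀ r, 0 ≤ r → 0 ≤ ut r := fun r => nonneg_of_deriv_deriv_eq_mul hut h0'
    (fun x hx => by have := hv x hx; split <;> positivity) hODE' hnorm'
  have hlin : ∀ r, Rt < r → deriv ut r = 1 ∧ ut r = r - at' := fun r =>
    eq_sub_of_deriv_deriv_eq_zero hut
      (fun x hx => by rw [hODE' x (hR.trans hx), if_neg hx.not_ge]; ring) hnorm' hscat'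
  set Ω' := fun x => deriv (deriv u) x * ut x - u x * deriv (deriv ut) x
  have hΩ' : ∀ x, 0 < x → Ω' x = 2⁻¹ * (if x ≤ Rt then 0 else v x * u x * ut x) := by
    intro x hx
    simp only [Ω', hODE x hx, hODE' x hx]
    split_ifs <;> ring
  have hΩ'nonneg : ∀ x, 0 < x → 0 ≤ Ω' x := fun x hx => by
    have := hv x hx; have := nonneg_of_deriv_deriv_eq_mul hu h0 hhalf hODE hnorm hx.le
    have := hut0 x hx.le
    rw [hΩ' x hx]; split_ifs <;> positivity
  have hΩ0 : wronskian u ut 0 = 0 := by simp [wronskian, h0, h0']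
  have hlim := tendsto_wronskian hnorm hscat hlin
  have hat : at' ≤ a := sub_nonneg.1 <| ge_of_tendsto hlim <| eventually_atTop.2
    ⟨0, fun x hx => nonneg_of_hasDerivAt_nonneg (hasDerivAt_wronskian hu hut) hΩ'nonneg hΩ0 hx⟩
  have hbound : ∀ r ∈ Ioi (max Rt a),
      2⁻¹ * ENNReal.ofReal (v r * (r - a) ^ 2) ≤ ENNReal.ofReal (Ω' r) := by
    intro r hr
    rw [mem_Ioi, max_lt_iff] at hr
    have hua := sub_le_of_deriv_deriv_eq_mul hu h0 hhalf hODE hnorm hscat (hR.trans hr.1).le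
    have hsq : (r - a) ^ 2 ≤ u r * (r - at') := by
      rw [sq]; exact mul_le_mul hua (by linarith) (by linarith) (by linarith)
    have := mul_le_mul_of_nonneg_left hsq (hv r (hR.trans hr.1))
    rw [← ENNReal.ofReal_ofNat 2, ← ENNReal.ofReal_inv_of_pos two_pos,
      ← ENNReal.ofReal_mul (by norm_num), hΩ' r (hR.trans hr.1), if_neg hr.1.not_ge, (hlin r hr.1).2]
    exact ENNReal.ofReal_le_ofReal (by linarith)
  calc 2⁻¹ * ∫⁻ r in Ioi (max Rt a), ENNReal.ofReal (v r * (r - a) ^ 2)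
      = ∫⁻ r in Ioi (max Rt a), 2⁻¹ * ENNReal.ofReal (v r * (r - a) ^ 2) :=
        (lintegral_const_mul' _ _ (by norm_num)).symm
    _ ≤ ∫⁻ r in Ioi (max Rt a), ENNReal.ofReal (Ω' r) := setLIntegral_mono' measurableSet_Ioi hbound
    _ ≤ ENNReal.ofReal (a - at') := lintegral_Ioi_ofReal_deriv_le (hR.le.trans (le_max_left _ _))
        (hasDerivAt_wronskian hu hut) hΩ'nonneg hΩ0 hlim
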